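/- In the two-group factor-model setup, suppose α₁ > α₂ and p₁(n)/p₂(n) → C for some C ∈ [0, ∞). Then a_{1,p₁(n)} / a_{2,p₂(n)} → 0 and, for every x > 0, P(Q_{p₁(n), p₂(n)} ≤ a_{2,p₂(n)} x) → Ψ_{α₂}(x) as n → ∞. (Proposition 2, Case 3, first subcase.) -/

import Mathlib

open MeasureTheory ProbabilityTheory Filter

noncomputable section

/-- The Fréchet distribution function with tail index `α`. -/
def frechetCDF (α x : ℝ) : ℝ := if 0 < x then Real.exp (-x ^ (-α)) else 0

/-- The norming constant `a_p = (Σ_{i<p} σ_i^α)^{1/α}`. -/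
def normConst (σ : ℕ → ℝ) (α : ℝ) (p : ℕ) : ℝ :=
  (∑ i ∈ Finset.range p, σ i ^ α) ^ (1 / α)

/-- Maximum of the first `p₁` variables of the first group and the first `p₂`
variables of the second group. -/
def Qmax {Ω : Type*} (X₁ X₂ : ℕ → Ω → ℝ) (p₁ p₂ : ℕ) (ω : Ω) : ℝ :=
  max (⨆ i : Fin p₁, X₁ i ω) (⨆ j : Fin p₂, X₂ j ω)

/-- Codomains of the family consisting of the factor `Z` and the two noise arrays. -/
def mixCodom (d : ℕ) : Unit ⊕ ℕ ⊕ ℕ → Type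
  | Sum.inl _ => Fin d → ℝ
  | Sum.inr _ => ℝ

instance mixCodomMeasurableSpace (d : ℕ) : ∀ i, MeasurableSpace (mixCodom d i)
  | Sum.inl _ => inferInstanceAs (MeasurableSpace (Fin d → ℝ))
  | Sum.inr (Sum.inl _) => inferInstanceAs (MeasurableSpace ℝ)
  | Sum.inr (Sum.inr _) => inferInstanceAs (MeasurableSpace ℝ)

/-- The family consisting of the factor `Z` and the two noise arrays. -/
def mixFun {Ω : Type*} {d : ℕ} (Z : Ω → Fin d → ℝ) (ε₁ ε₂ : ℕ → Ω → ℝ) :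
    ∀ i : Unit ⊕ ℕ ⊕ ℕ, Ω → mixCodom d i
  | Sum.inl _ => Z
  | Sum.inr (Sum.inl i) => ε₁ i
  | Sum.inr (Sum.inr j) => ε₂ j

/-!
Conditionally on the factor `Z` the variables `X_{1,i}`, `X_{2,j}` are independent, so
`P(Q ≤ t) = E[∏ᵢ (1 - F̄₁((t - fᵢ(Z))/σᵢ)) ∏ⱼ (1 - F̄₂((t - f̃ⱼ(Z))/σ̃ⱼ))]` with `F̄ₖ` the noise
tails. Take `t = a₂ x` with `a₂ = a_{2,p₂} → ∞`. For fixed `Z` the shifts are bounded, hence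
negligible against `t`, and `F̄ₖ(s) ~ s^{-αₖ}` turns the two sums of tail probabilities into
`Σᵢ σᵢ^{α₁} t^{-α₁} = (a₁/a₂)^{α₁} x^{-α₁} → 0` and `Σⱼ σ̃ⱼ^{α₂} t^{-α₂} = x^{-α₂}`. Every single
term is small, so `∏ (1 - uₖ) ≈ exp (-Σ uₖ)`, and dominated convergence concludes.
The ratio `a₁/a₂` tends to `0` because `a_{k,p} ≍ p^{1/αₖ}`, `p₁ = O(p₂)` and `1/α₁ < 1/α₂`.
-/

open Topology Finset

section Asymptotics

variable {γ ι : Type*} {l : Filter γ} {s : γ → Finset ι}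

lemma tendsto_sum_of_abs_le_mul {w e : γ → ι → ℝ} {L : ℝ}
    (hw : Tendsto (fun n => ∑ k ∈ s n, w n k) l (𝓝 L))
    (he : ∀ δ > 0, ∀ᶠ n in l, ∀ k ∈ s n, |e n k| ≤ δ * w n k) :
    Tendsto (fun n => ∑ k ∈ s n, e n k) l (𝓝 0) := by
  rw [Metric.tendsto_nhds]
  intro δ hδ
  have hL : 0 < |L| + 1 := by positivity
  filter_upwards [hw.eventually_lt_const ((le_abs_self L).trans_lt (lt_add_one _)),
    he (δ / (|L| + 1)) (by positivity)] with n hwn hen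
  rw [Real.dist_eq, sub_zero]
  calc |∑ k ∈ s n, e n k| ≤ ∑ k ∈ s n, |e n k| := abs_sum_le_sum_abs _ _
    _ ≤ ∑ k ∈ s n, δ / (|L| + 1) * w n k := sum_le_sum hen
    _ = δ / (|L| + 1) * ∑ k ∈ s n, w n k := (mul_sum _ _ _).symm
    _ < δ / (|L| + 1) * (|L| + 1) := by gcongr
    _ = δ := div_mul_cancel₀ _ hL.ne'

lemma tendsto_prod_one_sub_of_tendsto_sum {u : γ → ι → ℝ} {L : ℝ} (hu : ∀ n k, 0 ≤ u n k)
    (hsmall : ∀ δ > 0, ∀ᶠ n in l, ∀ k ∈ s n, u n k ≤ δ)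
    (hsum : Tendsto (fun n => ∑ k ∈ s n, u n k) l (𝓝 L)) :
    Tendsto (fun n => ∏ k ∈ s n, (1 - u n k)) l (𝓝 (Real.exp (-L))) := by
  have hlog : Tendsto (fun n => ∑ k ∈ s n, (Real.log (1 - u n k) + u n k)) l (𝓝 0) := by
    refine tendsto_sum_of_abs_le_mul hsum fun δ hδ => ?_
    filter_upwards [hsmall (min (1 / 2) (δ / 2)) (by positivity)] with n hn k hk
    have hu0 := hu n k
    have hu1 := (hn k hk).trans (min_le_left _ _)
    have hu2 := (hn k hk).trans (min_le_right _ _)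
    -- the first-order Taylor bound `|log (1 - u) + u| ≤ u ^ 2 / (1 - u)`
    have htaylor := Real.abs_log_sub_add_sum_range_le (x := u n k)
      (by rw [abs_of_nonneg hu0]; linarith) 1
    simp only [range_one, sum_singleton, zero_add, pow_one, Nat.cast_zero, div_one,
      abs_of_nonneg hu0] at htaylor
    calc |Real.log (1 - u n k) + u n k| ≤ u n k ^ 2 / (1 - u n k) := by rwa [add_comm]
      _ ≤ u n k ^ 2 / (1 / 2) := by gcongr; linarith
      _ ≤ δ * u n k := by rw [div_div_eq_mul_div, div_one]; nlinarith
  have hsumlog : Tendsto (fun n => ∑ k ∈ s n, Real.log (1 - u n k)) l (𝓝 (-L)) := by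
    simpa [sum_add_distrib] using hlog.sub hsum
  refine ((Real.continuous_exp.tendsto _).comp hsumlog).congr' ?_
  filter_upwards [hsmall (1 / 2) (by norm_num)] with n hn
  rw [Function.comp_apply, Real.exp_sum]
  exact prod_congr rfl fun k hk => Real.exp_log (by linarith [hn k hk])

lemma eventually_forall_mem_of_le {b : γ → ℝ} {y : γ → ι → ℝ} (hb : Tendsto b l atTop)
    (hy : ∀ᶠ n in l, ∀ k ∈ s n, b n ≤ y n k) {p : ℝ → Prop} (hp : ∀ᶠ t in atTop, p t) :
    ∀ᶠ n in l, ∀ k ∈ s n, p (y n k) := by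
  obtain ⟨S, hS⟩ := eventually_atTop.mp hp
  filter_upwards [hy, hb.eventually_ge_atTop S] with n hn hbn k hk
  exact hS _ (hbn.trans (hn k hk))

variable {T : ℝ → ℝ} {α : ℝ}

lemma tendsto_zero_of_rpow_mul_tendsto_one (hα : 0 < α)
    (hT : Tendsto (fun t => t ^ α * T t) atTop (𝓝 1)) : Tendsto T atTop (𝓝 0) := by
  have h := (tendsto_rpow_neg_atTop hα).mul hT
  rw [zero_mul] at h
  refine h.congr' ?_
  filter_upwards [eventually_gt_atTop 0] with t ht
  rw [← mul_assoc, ← Real.rpow_add ht, neg_add_cancel, Real.rpow_zero, one_mul]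

lemma tendsto_sum_of_rpow_mul_tendsto_one (hT : Tendsto (fun t => t ^ α * T t) atTop (𝓝 1))
    {b : γ → ℝ} {y : γ → ι → ℝ} (hb : Tendsto b l atTop)
    (hy : ∀ᶠ n in l, ∀ k ∈ s n, b n ≤ y n k) {L : ℝ}
    (hL : Tendsto (fun n => ∑ k ∈ s n, y n k ^ (-α)) l (𝓝 L)) :
    Tendsto (fun n => ∑ k ∈ s n, T (y n k)) l (𝓝 L) := by
  have herr : Tendsto (fun n => ∑ k ∈ s n, (T (y n k) - y n k ^ (-α))) l (𝓝 0) := by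
    refine tendsto_sum_of_abs_le_mul hL fun δ hδ => ?_
    have hT' : ∀ᶠ t in atTop, 0 < t ∧ |t ^ α * T t - 1| < δ :=
      (eventually_gt_atTop 0).and (Metric.tendsto_nhds.mp hT δ hδ)
    filter_upwards [eventually_forall_mem_of_le hb hy hT'] with n hn k hk
    obtain ⟨hpos, hclose⟩ := hn k hk
    have hsplit : T (y n k) - y n k ^ (-α) = y n k ^ (-α) * (y n k ^ α * T (y n k) - 1) := by
      rw [mul_sub, ← mul_assoc, ← Real.rpow_add hpos, neg_add_cancel, Real.rpow_zero,
        one_mul, mul_one]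
    rw [hsplit, abs_mul, abs_of_pos (Real.rpow_pos_of_pos hpos _), mul_comm δ]
    exact mul_le_mul_of_nonneg_left hclose.le (Real.rpow_nonneg hpos.le _)
  simpa [sum_sub_distrib] using herr.add hL

lemma tendsto_prod_one_sub_of_rpow_mul_tendsto_one (hα : 0 < α) (hT0 : ∀ t, 0 ≤ T t)
    (hT : Tendsto (fun t => t ^ α * T t) atTop (𝓝 1)) {b : γ → ℝ} {y : γ → ι → ℝ}
    (hb : Tendsto b l atTop) (hy : ∀ᶠ n in l, ∀ k ∈ s n, b n ≤ y n k) {L : ℝ}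
    (hL : Tendsto (fun n => ∑ k ∈ s n, y n k ^ (-α)) l (𝓝 L)) :
    Tendsto (fun n => ∏ k ∈ s n, (1 - T (y n k))) l (𝓝 (Real.exp (-L))) :=
  tendsto_prod_one_sub_of_tendsto_sum (fun _ _ => hT0 _)
    (fun _ hδ => eventually_forall_mem_of_le hb hy
      ((tendsto_zero_of_rpow_mul_tendsto_one hα hT).eventually (eventually_le_nhds hδ)))
    (tendsto_sum_of_rpow_mul_tendsto_one hT hb hy hL)

end Asymptotics

lemma div_rpow_neg_eq {B c α : ℝ} (hB : 0 ≤ B) (hc : 0 ≤ c) :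
    (B / c) ^ (-α) = c ^ α * B ^ (-α) := by
  rw [Real.div_rpow hB hc, Real.rpow_neg hc, div_inv_eq_mul, mul_comm]

lemma sub_div_le_sub_div {A c M σ C : ℝ} (hc : |c| ≤ M) (hσ : 0 < σ) (hσC : σ ≤ C)
    (hA : M ≤ A) : (A - M) / C ≤ (A - c) / σ :=
  calc (A - M) / C ≤ (A - M) / σ := div_le_div_of_nonneg_left (sub_nonneg.2 hA) hσ hσC
    _ ≤ (A - c) / σ := by gcongr; linarith [le_abs_self c]

lemma add_mul_le_iff_le_sub_div {u v e t : ℝ} (hv : 0 < v) : u + v * e ≤ t ↔ e ≤ (t - u) / v := by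
  rw [le_div_iff₀ hv, mul_comm]
  constructor <;> intro h <;> linarith

section Shift

variable {γ ι : Type*} {l : Filter γ} {s : γ → Finset ι} {a : γ → ℝ} {x M C α : ℝ}
  {φ σ : ι → ℝ}

lemma tendsto_mul_sub_div_atTop (ha : Tendsto a l atTop) (hx : 0 < x) (hC : 0 < C) :
    Tendsto (fun n => (a n * x - M) / C) l atTop := by
  simpa only [sub_eq_add_neg] using
    (tendsto_atTop_add_const_right l (-M) (ha.atTop_mul_const hx)).atTop_div_const hC

lemma eventually_mul_sub_div_le (ha : Tendsto a l atTop) (hx : 0 < x)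
    (hφ : ∀ k, |φ k| ≤ M) (hσ : ∀ k, 0 < σ k) (hσC : ∀ k, σ k ≤ C) :
    ∀ᶠ n in l, ∀ k ∈ s n, (a n * x - M) / C ≤ (a n * x - φ k) / σ k := by
  filter_upwards [ha.eventually_ge_atTop (M / x)] with n hn k _
  exact sub_div_le_sub_div (hφ k) (hσ k) (hσC k) (by rwa [div_le_iff₀ hx] at hn)

lemma tendsto_sub_div_of_tendsto_atTop (ha : Tendsto a l atTop) :
    Tendsto (fun n => x - M / a n) l (𝓝 x) := by
  simpa using tendsto_const_nhds.sub (tendsto_const_nhds (x := M) |>.div_atTop ha)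

lemma tendsto_sum_mul_sub_div_rpow_neg (ha : Tendsto a l atTop) (hx : 0 < x) (hα : 0 ≤ α)
    (hφ : ∀ k, |φ k| ≤ M) (hσ : ∀ k, 0 < σ k) {c : γ → ℝ} (hc : ∀ n, 0 ≤ c n)
    (hsum : ∀ n, ∑ k ∈ s n, σ k ^ α = c n ^ α) {r : ℝ}
    (hr : Tendsto (fun n => c n / a n) l (𝓝 r)) :
    Tendsto (fun n => ∑ k ∈ s n, ((a n * x - φ k) / σ k) ^ (-α)) l (𝓝 (r ^ α * x ^ (-α))) := by
  have hlim : ∀ M' : ℝ, Tendsto (fun n => (c n / a n) ^ α * (x - M' / a n) ^ (-α)) l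
      (𝓝 (r ^ α * x ^ (-α))) := fun M' =>
    (hr.rpow_const (Or.inr hα)).mul
      ((tendsto_sub_div_of_tendsto_atTop ha).rpow_const (Or.inl hx.ne'))
  -- the sum is squeezed between the values at the extreme shifts `φ k = ∓ M`
  have hextreme : ∀ n, 0 < a n → ∀ M' : ℝ, 0 ≤ a n * x - M' →
      ∑ k ∈ s n, σ k ^ α * (a n * x - M') ^ (-α) = (c n / a n) ^ α * (x - M' / a n) ^ (-α) := by
    intro n han M' hM'
    have hshift : x - M' / a n = (a n * x - M') / a n := by field_simp
    have hpow : a n ^ α ≠ 0 := (Real.rpow_pos_of_pos han α).ne'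
    rw [← sum_mul, hsum, Real.div_rpow (hc n) han.le, hshift, div_rpow_neg_eq hM' han.le]
    field_simp
  have hev : ∀ᶠ n in l, 0 < a n ∧ |M| < a n * x := (ha.eventually_gt_atTop 0).and
    ((ha.eventually_gt_atTop (|M| / x)).mono fun n hn => by rwa [div_lt_iff₀ hx] at hn)
  refine tendsto_of_tendsto_of_tendsto_of_le_of_le' (hlim (-M)) (hlim M) ?_ ?_ <;>
  · filter_upwards [hev] with n ⟨han, hM⟩
    rw [abs_lt] at hM
    rw [← hextreme n han _ (by linarith)]
    refine sum_le_sum fun k _ => ?_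
    have hφk := abs_le.mp (hφ k)
    rw [div_rpow_neg_eq (by linarith) (hσ k).le]
    exact mul_le_mul_of_nonneg_left
      (Real.rpow_le_rpow_of_nonpos (by linarith) (by linarith) (by linarith))
      (Real.rpow_nonneg (hσ k).le _)

end Shift

lemma tendsto_prod_one_sub_mul_prod_one_sub {γ ι κ : Type*} {l : Filter γ} {s₁ : γ → Finset ι}
    {s₂ : γ → Finset κ} {T₁ T₂ : ℝ → ℝ} {α₁ α₂ x M C : ℝ} (hα₁ : 0 < α₁) (hα₂ : 0 < α₂)
    (hx : 0 < x) (hC : 0 < C) (hT₁0 : ∀ t, 0 ≤ T₁ t) (hT₂0 : ∀ t, 0 ≤ T₂ t)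
    (hT₁ : Tendsto (fun t => t ^ α₁ * T₁ t) atTop (𝓝 1))
    (hT₂ : Tendsto (fun t => t ^ α₂ * T₂ t) atTop (𝓝 1))
    {φ σ : ι → ℝ} {ψ τ : κ → ℝ} (hφ : ∀ i, |φ i| ≤ M) (hψ : ∀ j, |ψ j| ≤ M)
    (hσ : ∀ i, σ i ∈ Set.Ioc 0 C) (hτ : ∀ j, τ j ∈ Set.Ioc 0 C)
    {a₁ a₂ : γ → ℝ} (ha₁ : ∀ n, 0 ≤ a₁ n) (ha₂ : ∀ n, 0 ≤ a₂ n)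
    (hsum₁ : ∀ n, ∑ i ∈ s₁ n, σ i ^ α₁ = a₁ n ^ α₁) (hsum₂ : ∀ n, ∑ j ∈ s₂ n, τ j ^ α₂ = a₂ n ^ α₂)
    (ha₂top : Tendsto a₂ l atTop) (hratio : Tendsto (fun n => a₁ n / a₂ n) l (𝓝 0)) :
    Tendsto (fun n => (∏ i ∈ s₁ n, (1 - T₁ ((a₂ n * x - φ i) / σ i))) *
      ∏ j ∈ s₂ n, (1 - T₂ ((a₂ n * x - ψ j) / τ j))) l (𝓝 (Real.exp (-x ^ (-α₂)))) := by
  have hb := tendsto_mul_sub_div_atTop (M := M) ha₂top hx hC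
  have hself : Tendsto (fun n => a₂ n / a₂ n) l (𝓝 1) := tendsto_const_nhds.congr'
    ((ha₂top.eventually_gt_atTop 0).mono fun n hn => (div_self hn.ne').symm)
  have h₁ := tendsto_prod_one_sub_of_rpow_mul_tendsto_one hα₁ hT₁0 hT₁ hb
    (eventually_mul_sub_div_le ha₂top hx hφ (fun i => (hσ i).1) fun i => (hσ i).2)
    (tendsto_sum_mul_sub_div_rpow_neg ha₂top hx hα₁.le hφ (fun i => (hσ i).1) ha₁ hsum₁ hratio)
  have h₂ := tendsto_prod_one_sub_of_rpow_mul_tendsto_one hα₂ hT₂0 hT₂ hb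
    (eventually_mul_sub_div_le ha₂top hx hψ (fun j => (hτ j).1) fun j => (hτ j).2)
    (tendsto_sum_mul_sub_div_rpow_neg ha₂top hx hα₂.le hψ (fun j => (hτ j).1) ha₂ hsum₂ hself)
  simpa [Real.zero_rpow hα₁.ne'] using h₁.mul h₂

section NormConst

variable {σ : ℕ → ℝ} {α C₁ C₂ : ℝ}

lemma normConst_nonneg (hσ : ∀ i, 0 ≤ σ i) (p : ℕ) : 0 ≤ normConst σ α p :=
  Real.rpow_nonneg (sum_nonneg fun i _ => Real.rpow_nonneg (hσ i) α) _

lemma normConst_rpow (hα : α ≠ 0) (hσ : ∀ i, 0 ≤ σ i) (p : ℕ) :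
    normConst σ α p ^ α = ∑ i ∈ range p, σ i ^ α := by
  rw [normConst, ← Real.rpow_mul (sum_nonneg fun i _ => Real.rpow_nonneg (hσ i) α), one_div,
    inv_mul_cancel₀ hα, Real.rpow_one]

lemma card_mul_rpow_rpow_one_div (hα : α ≠ 0) {c : ℝ} (hc : 0 ≤ c) (p : ℕ) :
    ((p : ℝ) * c ^ α) ^ (1 / α) = c * (p : ℝ) ^ (1 / α) := by
  rw [Real.mul_rpow (Nat.cast_nonneg _) (Real.rpow_nonneg hc _), ← Real.rpow_mul hc,
    mul_one_div_cancel hα, Real.rpow_one, mul_comm]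

lemma mul_rpow_le_normConst (hα : 0 < α) (hC₁ : 0 ≤ C₁) (hσ : ∀ i, C₁ ≤ σ i) (p : ℕ) :
    C₁ * (p : ℝ) ^ (1 / α) ≤ normConst σ α p := by
  rw [← card_mul_rpow_rpow_one_div hα.ne' hC₁]
  refine Real.rpow_le_rpow (by positivity) ?_ (by positivity)
  simpa using card_nsmul_le_sum (range p) (fun i => σ i ^ α) _
    fun i _ => Real.rpow_le_rpow hC₁ (hσ i) hα.le

lemma normConst_le_mul_rpow (hα : 0 < α) (hσ₀ : ∀ i, 0 ≤ σ i) (hσ : ∀ i, σ i ≤ C₂) (p : ℕ) :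
    normConst σ α p ≤ C₂ * (p : ℝ) ^ (1 / α) := by
  rw [← card_mul_rpow_rpow_one_div hα.ne' ((hσ₀ 0).trans (hσ 0))]
  refine Real.rpow_le_rpow (sum_nonneg fun i _ => Real.rpow_nonneg (hσ₀ i) α) ?_ (by positivity)
  simpa using sum_le_card_nsmul (range p) (fun i => σ i ^ α) _
    fun i _ => Real.rpow_le_rpow (hσ₀ i) (hσ i) hα.le

lemma tendsto_normConst_atTop (hα : 0 < α) (hC₁ : 0 < C₁) (hσ : ∀ i, C₁ ≤ σ i)
    {γ : Type*} {l : Filter γ} {p : γ → ℕ} (hp : Tendsto (fun n => (p n : ℝ)) l atTop) :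
    Tendsto (fun n => normConst σ α (p n)) l atTop :=
  tendsto_atTop_mono (fun n => mul_rpow_le_normConst hα hC₁.le hσ (p n))
    (((tendsto_rpow_atTop (by positivity)).comp hp).const_mul_atTop hC₁)

lemma tendsto_normConst_div_normConst {σt : ℕ → ℝ} {α₁ α₂ C : ℝ} (hα₂ : 0 < α₂)
    (hα : α₂ < α₁) (hC₁ : 0 < C₁) (hσ₀ : ∀ i, 0 ≤ σ i) (hσ : ∀ i, σ i ≤ C₂)
    (hσt : ∀ j, C₁ ≤ σt j) {γ : Type*} {l : Filter γ} {p₁ p₂ : γ → ℕ}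
    (hp₂ : Tendsto (fun n => (p₂ n : ℝ)) l atTop)
    (hratio : Tendsto (fun n => (p₁ n : ℝ) / p₂ n) l (𝓝 C)) :
    Tendsto (fun n => normConst σ α₁ (p₁ n) / normConst σt α₂ (p₂ n)) l (𝓝 0) := by
  have hα₁ : 0 < α₁ := hα₂.trans hα
  have hγ : 0 < 1 / α₂ - 1 / α₁ := sub_pos.2 (one_div_lt_one_div_of_lt hα₂ hα)
  have hlim : Tendsto (fun n => C₂ / C₁ * (((p₁ n : ℝ) / p₂ n) ^ (1 / α₁) *
      (p₂ n : ℝ) ^ (-(1 / α₂ - 1 / α₁)))) l (𝓝 0) := by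
    simpa using ((hratio.rpow_const (Or.inr (by positivity))).mul
      ((tendsto_rpow_neg_atTop hγ).comp hp₂)).const_mul (C₂ / C₁)
  refine squeeze_zero' (Eventually.of_forall fun n => div_nonneg (normConst_nonneg hσ₀ _)
    (normConst_nonneg (fun j => hC₁.le.trans (hσt j)) _)) ?_ hlim
  filter_upwards [hp₂.eventually_gt_atTop 0] with n hn
  calc normConst σ α₁ (p₁ n) / normConst σt α₂ (p₂ n)
      ≤ C₂ * (p₁ n : ℝ) ^ (1 / α₁) / (C₁ * (p₂ n : ℝ) ^ (1 / α₂)) :=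
        div_le_div₀ (mul_nonneg ((hσ₀ 0).trans (hσ 0)) (by positivity))
          (normConst_le_mul_rpow hα₁ hσ₀ hσ _) (by positivity)
          (mul_rpow_le_normConst hα₂ hC₁.le hσt _)
    _ = _ := by
        rw [Real.div_rpow (Nat.cast_nonneg _) hn.le, neg_sub, Real.rpow_sub hn]
        field_simp

end NormConst

lemma ProbabilityTheory.IndepFun.measureReal_preimage_eq_integral
    {Ω α β : Type*} [MeasurableSpace Ω] [MeasurableSpace α] [MeasurableSpace β]
    {P : Measure Ω} [IsProbabilityMeasure P] {X : Ω → α} {Y : Ω → β}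
    (hXY : IndepFun X Y P) (hX : Measurable X) (hY : Measurable Y) {E : Set (α × β)}
    (hE : MeasurableSet E) :
    P.real ((fun ω => (X ω, Y ω)) ⁻¹' E) = ∫ ω, (P.map Y).real (Prod.mk (X ω) ⁻¹' E) ∂P := by
  have hsec : Measurable fun a => P.map Y (Prod.mk a ⁻¹' E) := measurable_measure_prodMk_left hE
  simp only [measureReal_def]
  rw [integral_toReal (f := fun ω => P.map Y (Prod.mk (X ω) ⁻¹' E)) (hsec.comp hX).aemeasurable
      (ae_of_all _ fun _ => measure_lt_top _ _),
    ← Measure.map_apply (hX.prodMk hY) hE,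
    (indepFun_iff_map_prod_eq_prod_map_map hX.aemeasurable hY.aemeasurable).mp hXY,
    Measure.prod_apply hE, lintegral_map hsec hX]

lemma ProbabilityTheory.iIndepFun.measureReal_map_forall_le {Ω ι : Type*} [MeasurableSpace Ω]
    {P : Measure Ω} {ε : ι → Ω → ℝ} (hε : iIndepFun ε P) (hεm : ∀ k, Measurable (ε k))
    (S : Finset ι) (c : ι → ℝ) :
    (P.map fun ω k => ε k ω).real {w | ∀ k ∈ S, w k ≤ c k} =
      ∏ k ∈ S, P.real {ω | ε k ω ≤ c k} := by
  have hbox : MeasurableSet {w : ι → ℝ | ∀ k ∈ S, w k ≤ c k} := by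
    simp only [Set.ofPred_forall]
    exact .biInter S.countable_toSet fun k _ => measurableSet_le (measurable_pi_apply k)
      measurable_const
  have hpre : (fun ω k => ε k ω) ⁻¹' {w | ∀ k ∈ S, w k ≤ c k} = ⋂ k ∈ S, {ω | ε k ω ≤ c k} := by
    ext; simp
  rw [measureReal_def, Measure.map_apply (measurable_pi_lambda _ hεm) hbox, hpre,
    hε.meas_biInter (s := fun k => {ω | ε k ω ≤ c k})
      fun k _ => ⟨Set.Iic (c k), measurableSet_Iic, rfl⟩, ENNReal.toReal_prod]
  rfl

lemma measureReal_le_eq_one_sub {Ω : Type*} [MeasurableSpace Ω] {P : Measure Ω}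
    [IsProbabilityMeasure P] {Y Y₀ : Ω → ℝ} (hY₀ : Measurable Y₀) (hid : IdentDistrib Y Y₀ P P)
    (c : ℝ) : P.real {ω | Y ω ≤ c} = 1 - P.real {ω | c < Y₀ ω} := by
  have hcompl : {ω | c < Y₀ ω} = {ω | Y₀ ω ≤ c}ᶜ := by ext; simp
  rw [hcompl, probReal_compl_eq_one_sub (s := {ω | Y₀ ω ≤ c}) (hY₀ measurableSet_Iic),
    sub_sub_cancel]
  exact congrArg ENNReal.toReal (hid.measure_mem_eq (s := Set.Iic c) measurableSet_Iic)

lemma measurable_measureReal_lt {Ω : Type*} [MeasurableSpace Ω] (P : Measure Ω)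
    [IsFiniteMeasure P] (Y : Ω → ℝ) : Measurable fun c => P.real {ω | c < Y ω} :=
  Antitone.measurable fun _ _ hcc' => measureReal_mono fun _ hω => hcc'.trans_lt hω

lemma tendsto_integral_of_mem_unitInterval {Ω : Type*} [MeasurableSpace Ω] {P : Measure Ω}
    [IsProbabilityMeasure P] {F : ℕ → Ω → ℝ} (hF : ∀ n, Measurable (F n))
    (hI : ∀ n ω, F n ω ∈ unitInterval) {c : ℝ}
    (hlim : ∀ᵐ ω ∂P, Tendsto (fun n => F n ω) atTop (𝓝 c)) :
    Tendsto (fun n => ∫ ω, F n ω ∂P) atTop (𝓝 c) := by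
  simpa using tendsto_integral_of_dominated_convergence (fun _ => 1)
    (fun n => (hF n).aestronglyMeasurable) (integrable_const 1)
    (fun n => ae_of_all _ fun ω => by
      rw [Real.norm_eq_abs, abs_of_nonneg (hI n ω).1]; exact (hI n ω).2) hlim

lemma Qmax_le_iff {Ω : Type*} {X₁ X₂ : ℕ → Ω → ℝ} {q₁ q₂ : ℕ} (hq₁ : 0 < q₁) (hq₂ : 0 < q₂)
    {ω : Ω} {t : ℝ} :
    Qmax X₁ X₂ q₁ q₂ ω ≤ t ↔ (∀ i < q₁, X₁ i ω ≤ t) ∧ ∀ j < q₂, X₂ j ω ≤ t := by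
  have := Fin.pos_iff_nonempty.mp hq₁
  have := Fin.pos_iff_nonempty.mp hq₂
  simp only [Qmax, max_le_iff, ciSup_le_iff (Set.finite_range _).bddAbove, Fin.forall_iff]

section Model

variable {Ω : Type*} [MeasurableSpace Ω] {P : Measure Ω} {d : ℕ} {Z : Ω → Fin d → ℝ}
  {ε₁ ε₂ : ℕ → Ω → ℝ}

lemma iIndepFun_sumElim_of_iIndepFun_mixFun
    (h : iIndepFun (m := fun i => mixCodomMeasurableSpace d i) (mixFun Z ε₁ ε₂) P) :
    iIndepFun (fun k : ℕ ⊕ ℕ => Sum.elim ε₁ ε₂ k) P := by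
  have hm : (fun k => mixCodomMeasurableSpace d (Sum.inr k)) = fun _ => Real.measurableSpace := by
    funext k; cases k <;> rfl
  have hf : (fun k => mixFun Z ε₁ ε₂ (Sum.inr k)) = fun k => Sum.elim ε₁ ε₂ k := by
    funext k; cases k <;> rfl
  have := h.precomp Sum.inr_injective
  rwa [hm, hf] at this

lemma indepFun_sumElim_of_iIndepFun_mixFun (hZ : Measurable Z) (hε₁ : ∀ i, Measurable (ε₁ i))
    (hε₂ : ∀ j, Measurable (ε₂ j))
    (h : iIndepFun (m := fun i => mixCodomMeasurableSpace d i) (mixFun Z ε₁ ε₂) P) :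
    IndepFun Z (fun ω (k : ℕ ⊕ ℕ) => Sum.elim ε₁ ε₂ k ω) P := by
  have hmeas : ∀ i, Measurable (mixFun Z ε₁ ε₂ i) := by
    rintro (_ | i | j); exacts [hZ, hε₁ i, hε₂ j]
  set m := fun i => MeasurableSpace.comap (mixFun Z ε₁ ε₂ i) (mixCodomMeasurableSpace d i)
  have hind := indep_iSup_of_disjoint (m := m) (fun i => (hmeas i).comap_le)
    ((iIndepFun_iff_iIndep _ _ _).mp h)
    (S := {Sum.inl ()}) (T := Set.range Sum.inr) (by simp)
  have hW : Measurable[⨆ i ∈ Set.range Sum.inr, m i]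
      (fun ω (k : ℕ ⊕ ℕ) => Sum.elim ε₁ ε₂ k ω) := by
    let _ : MeasurableSpace Ω := ⨆ i ∈ Set.range Sum.inr, m i
    refine measurable_pi_iff.mpr ?_
    rintro (i | j)
    · exact (comap_measurable (ε₁ i)).mono
        (le_biSup m (Set.mem_range_self (f := Sum.inr) (Sum.inl i))) le_rfl
    · exact (comap_measurable (ε₂ j)).mono
        (le_biSup m (Set.mem_range_self (f := Sum.inr) (Sum.inr j))) le_rfl
  rw [IndepFun_iff_Indep]
  exact indep_of_indep_of_le_right (indep_of_indep_of_le_left hind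
    (show m (Sum.inl ()) ≤ _ from le_biSup m (Set.mem_singleton _))) hW.comap_le

theorem measureReal_Qmax_le_eq_integral [IsProbabilityMeasure P] (hZ : Measurable Z)
    {f g : ℕ → (Fin d → ℝ) → ℝ} (hf : ∀ i, Measurable (f i)) (hg : ∀ j, Measurable (g j))
    {σ σt : ℕ → ℝ} (hσ : ∀ i, 0 < σ i) (hσt : ∀ j, 0 < σt j) (hε₁ : ∀ i, Measurable (ε₁ i))
    (hε₂ : ∀ j, Measurable (ε₂ j))
    (hid₁ : ∀ i, IdentDistrib (ε₁ i) (ε₁ 0) P P) (hid₂ : ∀ j, IdentDistrib (ε₂ j) (ε₂ 0) P P)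
    (hindep : iIndepFun (m := fun i => mixCodomMeasurableSpace d i) (mixFun Z ε₁ ε₂) P)
    {X₁ X₂ : ℕ → Ω → ℝ} (hX₁ : ∀ i ω, X₁ i ω = f i (Z ω) + σ i * ε₁ i ω)
    (hX₂ : ∀ j ω, X₂ j ω = g j (Z ω) + σt j * ε₂ j ω) {q₁ q₂ : ℕ} (hq₁ : 0 < q₁) (hq₂ : 0 < q₂)
    (t : ℝ) :
    P.real {ω | Qmax X₁ X₂ q₁ q₂ ω ≤ t} =
      ∫ ω, (∏ i ∈ range q₁, (1 - P.real {ω' | (t - f i (Z ω)) / σ i < ε₁ 0 ω'})) *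
        ∏ j ∈ range q₂, (1 - P.real {ω' | (t - g j (Z ω)) / σt j < ε₂ 0 ω'}) ∂P := by
  set W : Ω → ℕ ⊕ ℕ → ℝ := fun ω k => Sum.elim ε₁ ε₂ k ω
  have hεm : ∀ k, Measurable (Sum.elim ε₁ ε₂ k) := by rintro (i | j); exacts [hε₁ i, hε₂ j]
  set h : ℕ ⊕ ℕ → (Fin d → ℝ) → ℝ :=
    Sum.elim (fun i z => (t - f i z) / σ i) fun j z => (t - g j z) / σt j
  have hh : ∀ k, Measurable (h k) := by
    rintro (i | j)
    exacts [(measurable_const.sub (hf i)).div_const _, (measurable_const.sub (hg j)).div_const _]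
  set S := (range q₁).disjSum (range q₂)
  set E := {p : (Fin d → ℝ) × (ℕ ⊕ ℕ → ℝ) | ∀ k ∈ S, p.2 k ≤ h k p.1}
  have hE : MeasurableSet E := by
    simp only [E, Set.ofPred_forall]
    exact .biInter S.countable_toSet fun k _ => measurableSet_le
      ((measurable_pi_apply k).comp measurable_snd) ((hh k).comp measurable_fst)
  have hQ : {ω | Qmax X₁ X₂ q₁ q₂ ω ≤ t} = (fun ω => (Z ω, W ω)) ⁻¹' E := by
    ext ω
    simp [Qmax_le_iff hq₁ hq₂, hX₁, hX₂, E, S, W, h, add_mul_le_iff_le_sub_div (hσ _),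
      add_mul_le_iff_le_sub_div (hσt _)]
  rw [hQ, (indepFun_sumElim_of_iIndepFun_mixFun hZ hε₁ hε₂ hindep).measureReal_preimage_eq_integral
    hZ (measurable_pi_lambda _ hεm) hE]
  refine integral_congr_ae (ae_of_all _ fun ω => ?_)
  change (P.map W).real {w | ∀ k ∈ S, w k ≤ h k (Z ω)} = _
  rw [(iIndepFun_sumElim_of_iIndepFun_mixFun hindep).measureReal_map_forall_le hεm, prod_disjSum]
  simp only [Sum.elim_inl, Sum.elim_inr, h,
    measureReal_le_eq_one_sub (hε₁ 0) (hid₁ _), measureReal_le_eq_one_sub (hε₂ 0) (hid₂ _)]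

end Model

theorem prop2_case3_sub1_general
    {Ω : Type*} [MeasurableSpace Ω] (P : Measure Ω) [IsProbabilityMeasure P]
    (d : ℕ) (Z : Ω → Fin d → ℝ) (hZm : Measurable Z)
    (f g : ℕ → (Fin d → ℝ) → ℝ) (hfm : ∀ i, Measurable (f i)) (hgm : ∀ j, Measurable (g j))
    (hfbdd : ∀ᵐ ω ∂P, ∃ M : ℝ, ∀ i, |f i (Z ω)| ≤ M)
    (hgbdd : ∀ᵐ ω ∂P, ∃ M : ℝ, ∀ j, |g j (Z ω)| ≤ M)
    (C₁ C₂ : ℝ) (hC₁ : 0 < C₁) (hC₁₂ : C₁ ≤ C₂)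
    (σ σt : ℕ → ℝ) (hσ : ∀ i, σ i ∈ Set.Icc C₁ C₂) (hσt : ∀ j, σt j ∈ Set.Icc C₁ C₂)
    (α₁ α₂ : ℝ) (hα₁ : 0 < α₁) (hα₂ : 0 < α₂)
    (ε₁ ε₂ : ℕ → Ω → ℝ) (hε₁m : ∀ i, Measurable (ε₁ i)) (hε₂m : ∀ j, Measurable (ε₂ j))
    (hid₁ : ∀ i, IdentDistrib (ε₁ i) (ε₁ 0) P P)
    (hid₂ : ∀ j, IdentDistrib (ε₂ j) (ε₂ 0) P P)
    (hindep : iIndepFun (m := fun i => mixCodomMeasurableSpace d i) (mixFun Z ε₁ ε₂) P)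
    (htail₁ : Tendsto (fun x : ℝ => x ^ α₁ * (P {ω | x < ε₁ 0 ω}).toReal) atTop (nhds 1))
    (htail₂ : Tendsto (fun x : ℝ => x ^ α₂ * (P {ω | x < ε₂ 0 ω}).toReal) atTop (nhds 1))
    (X₁ X₂ : ℕ → Ω → ℝ)
    (hX₁ : ∀ i ω, X₁ i ω = f i (Z ω) + σ i * ε₁ i ω)
    (hX₂ : ∀ j ω, X₂ j ω = g j (Z ω) + σt j * ε₂ j ω)
    (p₁ p₂ : ℕ → ℕ) (hp₁pos : ∀ n, 0 < p₁ n) (hp₂pos : ∀ n, 0 < p₂ n)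
    (hp₂ : Tendsto (fun n => (p₂ n : ℝ)) atTop atTop)
    (hα : α₂ < α₁)
    (C : ℝ)
    (hratio : Tendsto (fun n => (p₁ n : ℝ) / (p₂ n : ℝ)) atTop (nhds C)) :
    Tendsto (fun n => normConst σ α₁ (p₁ n) / normConst σt α₂ (p₂ n)) atTop (nhds 0) ∧
    ∀ x : ℝ, 0 < x →
      Tendsto (fun n => (P {ω | Qmax X₁ X₂ (p₁ n) (p₂ n) ω ≤ normConst σt α₂ (p₂ n) * x}).toReal) atTop (nhds (frechetCDF α₂ x)) := by
  have hσ₀ : ∀ i, 0 < σ i := fun i => hC₁.trans_le (hσ i).1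
  have hσt₀ : ∀ j, 0 < σt j := fun j => hC₁.trans_le (hσt j).1
  have hratio₁₂ := tendsto_normConst_div_normConst hα₂ hα hC₁ (fun i => (hσ₀ i).le)
    (fun i => (hσ i).2) (fun j => (hσt j).1) hp₂ hratio
  refine ⟨hratio₁₂, fun x hx => ?_⟩
  simp_rw [← measureReal_def, measureReal_Qmax_le_eq_integral hZm hfm hgm hσ₀ hσt₀ hε₁m hε₂m
    hid₁ hid₂ hindep hX₁ hX₂ (hp₁pos _) (hp₂pos _), frechetCDF, if_pos hx]
  have hcdf : ∀ (Y : Ω → ℝ) c, 1 - P.real {ω | c < Y ω} ∈ unitInterval :=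
    fun Y c => ⟨sub_nonneg.2 measureReal_le_one, sub_le_self _ measureReal_nonneg⟩
  refine tendsto_integral_of_mem_unitInterval (fun n => ?_) (fun n ω => unitInterval.mul_mem
    (unitInterval.prod_mem fun i _ => hcdf _ _) (unitInterval.prod_mem fun j _ => hcdf _ _)) ?_
  · exact (measurable_prod _ fun i _ => measurable_const.sub ((measurable_measureReal_lt P _).comp
      ((measurable_const.sub ((hfm i).comp hZm)).div_const _))).mul
      (measurable_prod _ fun j _ => measurable_const.sub ((measurable_measureReal_lt P _).comp
      ((measurable_const.sub ((hgm j).comp hZm)).div_const _)))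
  filter_upwards [hfbdd, hgbdd] with ω ⟨M₁, hM₁⟩ ⟨M₂, hM₂⟩
  exact tendsto_prod_one_sub_mul_prod_one_sub (T₁ := fun c => P.real {ω' | c < ε₁ 0 ω'})
    (T₂ := fun c => P.real {ω' | c < ε₂ 0 ω'}) (M := max M₁ M₂) hα₁ hα₂ hx
    (hC₁.trans_le hC₁₂) (fun _ => measureReal_nonneg) (fun _ => measureReal_nonneg) htail₁ htail₂
    (fun i => (hM₁ i).trans (le_max_left _ _)) (fun j => (hM₂ j).trans (le_max_right _ _))
    (fun i => ⟨hσ₀ i, (hσ i).2⟩) (fun j => ⟨hσt₀ j, (hσt j).2⟩)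
    (fun _ => normConst_nonneg (fun i => (hσ₀ i).le) _)
    (fun _ => normConst_nonneg (fun j => (hσt₀ j).le) _)
    (fun _ => (normConst_rpow hα₁.ne' (fun i => (hσ₀ i).le) _).symm)
    (fun _ => (normConst_rpow hα₂.ne' (fun j => (hσt₀ j).le) _).symm)
    (tendsto_normConst_atTop hα₂ hC₁ (fun j => (hσt j).1) hp₂) hratio₁₂

/-- Prop. 2, Case 3, first subcase: `α₁ > α₂` and `p₁/p₂ → C ∈ [0,∞)` imply `a₁/a₂ → 0` and `P(Q ≤ a₂ x) → Ψ_{α₂}(x)` for all `x > 0`. -/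
theorem prop2_case3_sub1
    {Ω : Type*} [MeasurableSpace Ω] (P : Measure Ω) [IsProbabilityMeasure P]
    (d : ℕ) (Z : Ω → Fin d → ℝ) (hZm : Measurable Z)
    (f g : ℕ → (Fin d → ℝ) → ℝ) (hfm : ∀ i, Measurable (f i)) (hgm : ∀ j, Measurable (g j))
    (hfbdd : ∀ᵐ ω ∂P, ∃ M : ℝ, ∀ i, |f i (Z ω)| ≤ M)
    (hgbdd : ∀ᵐ ω ∂P, ∃ M : ℝ, ∀ j, |g j (Z ω)| ≤ M)
    (C₁ C₂ : ℝ) (hC₁ : 0 < C₁) (hC₁₂ : C₁ ≤ C₂)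
    (σ σt : ℕ → ℝ) (hσ : ∀ i, σ i ∈ Set.Icc C₁ C₂) (hσt : ∀ j, σt j ∈ Set.Icc C₁ C₂)
    (α₁ α₂ : ℝ) (hα₁ : 0 < α₁) (hα₂ : 0 < α₂)
    (ε₁ ε₂ : ℕ → Ω → ℝ) (hε₁m : ∀ i, Measurable (ε₁ i)) (hε₂m : ∀ j, Measurable (ε₂ j))
    (hid₁ : ∀ i, IdentDistrib (ε₁ i) (ε₁ 0) P P)
    (hid₂ : ∀ j, IdentDistrib (ε₂ j) (ε₂ 0) P P)
    (hindep : iIndepFun (m := fun i => mixCodomMeasurableSpace d i) (mixFun Z ε₁ ε₂) P)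
    (htail₁ : Tendsto (fun x : ℝ => x ^ α₁ * (P {ω | x < ε₁ 0 ω}).toReal) atTop (nhds 1))
    (htail₂ : Tendsto (fun x : ℝ => x ^ α₂ * (P {ω | x < ε₂ 0 ω}).toReal) atTop (nhds 1))
    (X₁ X₂ : ℕ → Ω → ℝ)
    (hX₁ : ∀ i ω, X₁ i ω = f i (Z ω) + σ i * ε₁ i ω)
    (hX₂ : ∀ j ω, X₂ j ω = g j (Z ω) + σt j * ε₂ j ω)
    (p₁ p₂ : ℕ → ℕ) (hp₁pos : ∀ n, 0 < p₁ n) (hp₂pos : ∀ n, 0 < p₂ n)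
    (hp₁ : Tendsto (fun n => (p₁ n : ℝ)) atTop atTop)
    (hp₂ : Tendsto (fun n => (p₂ n : ℝ)) atTop atTop)
    (hα : α₂ < α₁)
    (C : ℝ) (hC : 0 ≤ C)
    (hratio : Tendsto (fun n => (p₁ n : ℝ) / (p₂ n : ℝ)) atTop (nhds C)) :
    Tendsto (fun n => normConst σ α₁ (p₁ n) / normConst σt α₂ (p₂ n)) atTop (nhds 0) ∧
    ∀ x : ℝ, 0 < x →
      Tendsto (fun n => (P {ω | Qmax X₁ X₂ (p₁ n) (p₂ n) ω ≤ normConst σt α₂ (p₂ n) * x}).toReal) atTop (nhds (frechetCDF α₂ x)) :=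
  prop2_case3_sub1_general P d Z hZm f g hfm hgm hfbdd hgbdd C₁ C₂ hC₁ hC₁₂ σ σt hσ hσt α₁ α₂ hα₁
    hα₂ ε₁ ε₂ hε₁m hε₂m hid₁ hid₂ hindep htail₁ htail₂ X₁ X₂ hX₁ hX₂ p₁ p₂ hp₁pos hp₂pos hp₂ hα C
    hratio
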